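/- Evaluating the arrow polynomial of the Kishino diagram at A = 1 gives F[K] = 3 + 2K₂ − 4K₁², and F[K] ≠ 1 as a polynomial in Z[K₁, K₂]; hence (given invariance) the flat Kishino diagram is distinguished from the trivial flat diagram. -/

import Mathlib

open LaurentPolynomial MvPolynomial

/-- The arrow polynomial of the Kishino diagram, as an element of ℤ[A,A⁻¹][K₁,K₂]:
⟨K⟩_A = 1 + A⁴ + A⁻⁴ − d²·K₁² + 2·K₂ with d = −A² − A⁻², where K₁ = X 0, K₂ = X 1. -/
noncomputable def kishinoArrow : MvPolynomial (Fin 2) (LaurentPolynomial ℤ) :=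
  MvPolynomial.C 1 + MvPolynomial.C (T 4) + MvPolynomial.C (T (-4)) - MvPolynomial.C ((-T 2 - T (-2)) ^ 2) * (X 0) ^ 2 + 2 * X 1

theorem map_kishinoArrow_of_map_T_eq_one {S : Type*} [CommRing S]
    (φ : LaurentPolynomial ℤ →+* S) (hφ : ∀ n : ℤ, φ (T n) = 1) :
    MvPolynomial.map φ kishinoArrow = MvPolynomial.C 3 + 2 * X 1 - 4 * (X 0) ^ 2 := by
  simp only [kishinoArrow, map_add, map_sub, map_mul, map_pow, map_ofNat, map_neg,
    MvPolynomial.map_C, MvPolynomial.map_X, map_one, hφ]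
  ring

theorem constantCoeff_three_add_two_mul_X_sub_four_mul_X_sq :
    constantCoeff (MvPolynomial.C 3 + 2 * X 1 - 4 * (X 0) ^ 2 : MvPolynomial (Fin 2) ℤ) = 3 := by
  simp only [map_add, map_sub, map_mul, map_pow, constantCoeff_X, map_ofNat]
  norm_num

/-- Evaluating the arrow polynomial of the Kishino diagram at A = 1 (any ring hom
ℤ[A,A⁻¹] → ℤ sending every power of A to 1) gives F[K] = 3 + 2K₂ − 4K₁², which is not
the constant polynomial 1; hence the flat Kishino diagram is nontrivial. -/
theorem kishino_flat_nontrivial (φ : LaurentPolynomial ℤ →+* ℤ)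
    (hφ : ∀ n : ℤ, φ (T n) = 1) :
    MvPolynomial.map φ kishinoArrow = MvPolynomial.C 3 + 2 * X 1 - 4 * (X 0) ^ 2 ∧
    MvPolynomial.map φ kishinoArrow ≠ 1 := by
  have hmap := map_kishinoArrow_of_map_T_eq_one φ hφ
  refine ⟨hmap, fun h_one => ?_⟩
  have h_coeff := congrArg constantCoeff (hmap.symm.trans h_one)
  rw [constantCoeff_three_add_two_mul_X_sub_four_mul_X_sq, map_one] at h_coeff
  norm_num at h_coeff
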